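/- arXiv:0808.2004 — 5 statements merged into one kernel-verified Lean document; each statement's English description precedes it below -/
import Mathlib

section
/- Let a₁, a₂ ∈ ℝ be nonzero, and let α, β, λ, μ, θ : ℝ² → ℝ be continuously differentiable functions satisfying at every point of ℝ² the differential part of the linear system: ∂α/∂u = λ·cosh θ, ∂α/∂v = μ·sinh θ, ∂β/∂u = λ·sinh θ, ∂β/∂v = μ·cosh θ, ∂λ/∂u = −cosh θ·(α/a₁) + sinh θ·(β/a₂) + μ·∂θ/∂v, ∂λ/∂v = μ·∂θ/∂u, ∂μ/∂u = λ·∂θ/∂v, ∂μ/∂v = sinh θ·(α/a₁) − cosh θ·(β/a₂) + λ·∂θ/∂u. Then the function μ² − λ² − (α²/a₁ − β²/a₂) has vanishing gradient on ℝ², i.e. it is a first integral of the system (constant on ℝ²). -/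
/-!
In the product rule for `μ² − λ² − (α²/a₁ − β²/a₂)` along either coordinate direction, the
`θ`-terms of the equations for `λ` and `μ` cancel each other, and what remains of the derivative
of `μ² − λ²` equals the derivative of `α²/a₁ − β²/a₂`. Both partial derivatives vanish, hence so
does the total derivative, and the quantity is constant on the connected space `ℝ²`.
-/

/-- Partial derivative with respect to the first variable `u`. -/
noncomputable def pdu (f : ℝ × ℝ → ℝ) (p : ℝ × ℝ) : ℝ :=
  deriv (fun u => f (u, p.2)) p.1

/-- Partial derivative with respect to the second variable `v`. -/
noncomputable def pdv (f : ℝ × ℝ → ℝ) (p : ℝ × ℝ) : ℝ :=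
  deriv (fun v => f (p.1, v)) p.2

section PartialDerivatives

variable {f : ℝ × ℝ → ℝ} {p : ℝ × ℝ}

theorem pdu_eq_fderiv_apply (hf : DifferentiableAt ℝ f p) : pdu f p = fderiv ℝ f p (1, 0) :=
  (hf.hasFDerivAt.comp_hasDerivAt p.1 ((hasDerivAt_id p.1).prodMk (hasDerivAt_const _ _))).deriv

theorem pdv_eq_fderiv_apply (hf : DifferentiableAt ℝ f p) : pdv f p = fderiv ℝ f p (0, 1) :=
  (hf.hasFDerivAt.comp_hasDerivAt p.2 ((hasDerivAt_const _ _).prodMk (hasDerivAt_id p.2))).deriv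

theorem fderiv_eq_zero_of_pdu_of_pdv (hf : DifferentiableAt ℝ f p) (hu : pdu f p = 0)
    (hv : pdv f p = 0) : fderiv ℝ f p = 0 := by
  rw [pdu_eq_fderiv_apply hf] at hu
  rw [pdv_eq_fderiv_apply hf] at hv
  refine ContinuousLinearMap.prod_ext (ContinuousLinearMap.ext_ring ?_)
    (ContinuousLinearMap.ext_ring ?_)
  · simpa using hu
  · simpa using hv

end PartialDerivatives

noncomputable def firstIntegral {X : Type*} (a₁ a₂ : ℝ) (m l a b : X → ℝ) : X → ℝ :=
  fun x => m x ^ 2 - l x ^ 2 - (a x ^ 2 / a₁ - b x ^ 2 / a₂)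

section FirstIntegral

variable {E : Type*} [NormedAddCommGroup E] [NormedSpace ℝ E]
  {a₁ a₂ : ℝ} {m l a b : E → ℝ} {x : E}

theorem differentiableAt_firstIntegral (hm : DifferentiableAt ℝ m x)
    (hl : DifferentiableAt ℝ l x) (ha : DifferentiableAt ℝ a x) (hb : DifferentiableAt ℝ b x) :
    DifferentiableAt ℝ (firstIntegral a₁ a₂ m l a b) x := by
  unfold firstIntegral
  fun_prop

theorem fderiv_firstIntegral_apply (hm : DifferentiableAt ℝ m x)
    (hl : DifferentiableAt ℝ l x) (ha : DifferentiableAt ℝ a x) (hb : DifferentiableAt ℝ b x)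
    (w : E) :
    fderiv ℝ (firstIntegral a₁ a₂ m l a b) x w =
      2 * (m x * fderiv ℝ m x w - l x * fderiv ℝ l x w -
        (a x * fderiv ℝ a x w / a₁ - b x * fderiv ℝ b x w / a₂)) := by
  -- `y / a₁` is definitionally `y * a₁⁻¹`.
  have hderiv : HasFDerivAt (firstIntegral a₁ a₂ m l a b) (_ : E →L[ℝ] ℝ) x :=
    ((hm.hasFDerivAt.pow 2).sub (hl.hasFDerivAt.pow 2)).sub
      (((ha.hasFDerivAt.pow 2).mul_const a₁⁻¹).sub ((hb.hasFDerivAt.pow 2).mul_const a₂⁻¹))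
  rw [hderiv.fderiv]
  simp only [sub_apply, smul_apply, smul_eq_mul, nsmul_eq_mul]
  ring

end FirstIntegral

section PartialDerivativesOfFirstIntegral

variable {a₁ a₂ : ℝ} {m l a b : ℝ × ℝ → ℝ} {p : ℝ × ℝ}

theorem pdu_firstIntegral (hm : DifferentiableAt ℝ m p) (hl : DifferentiableAt ℝ l p)
    (ha : DifferentiableAt ℝ a p) (hb : DifferentiableAt ℝ b p) :
    pdu (firstIntegral a₁ a₂ m l a b) p =
      2 * (m p * pdu m p - l p * pdu l p - (a p * pdu a p / a₁ - b p * pdu b p / a₂)) := by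
  rw [pdu_eq_fderiv_apply (differentiableAt_firstIntegral hm hl ha hb),
    fderiv_firstIntegral_apply hm hl ha hb, pdu_eq_fderiv_apply hm, pdu_eq_fderiv_apply hl,
    pdu_eq_fderiv_apply ha, pdu_eq_fderiv_apply hb]

theorem pdv_firstIntegral (hm : DifferentiableAt ℝ m p) (hl : DifferentiableAt ℝ l p)
    (ha : DifferentiableAt ℝ a p) (hb : DifferentiableAt ℝ b p) :
    pdv (firstIntegral a₁ a₂ m l a b) p =
      2 * (m p * pdv m p - l p * pdv l p - (a p * pdv a p / a₁ - b p * pdv b p / a₂)) := by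
  rw [pdv_eq_fderiv_apply (differentiableAt_firstIntegral hm hl ha hb),
    fderiv_firstIntegral_apply hm hl ha hb, pdv_eq_fderiv_apply hm, pdv_eq_fderiv_apply hl,
    pdv_eq_fderiv_apply ha, pdv_eq_fderiv_apply hb]

end PartialDerivativesOfFirstIntegral

theorem first_integral_of_linear_system_general
    (a₁ a₂ : ℝ)
    (al be lam mu th : ℝ × ℝ → ℝ)
    (hal : ContDiff ℝ 1 al) (hbe : ContDiff ℝ 1 be) (hlam : ContDiff ℝ 1 lam)
    (hmu : ContDiff ℝ 1 mu)
    (hau : ∀ p : ℝ × ℝ, pdu al p = lam p * Real.cosh (th p))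
    (hav : ∀ p : ℝ × ℝ, pdv al p = mu p * Real.sinh (th p))
    (hbu : ∀ p : ℝ × ℝ, pdu be p = lam p * Real.sinh (th p))
    (hbv : ∀ p : ℝ × ℝ, pdv be p = mu p * Real.cosh (th p))
    (hlu : ∀ p : ℝ × ℝ, pdu lam p =
      -Real.cosh (th p) * (al p / a₁) + Real.sinh (th p) * (be p / a₂) + mu p * pdv th p)
    (hlv : ∀ p : ℝ × ℝ, pdv lam p = mu p * pdu th p)
    (hmuu : ∀ p : ℝ × ℝ, pdu mu p = lam p * pdv th p)
    (hmuv : ∀ p : ℝ × ℝ, pdv mu p =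
      Real.sinh (th p) * (al p / a₁) - Real.cosh (th p) * (be p / a₂) + lam p * pdu th p)
    (F : ℝ × ℝ → ℝ)
    (hF : F = fun p : ℝ × ℝ =>
      mu p ^ 2 - lam p ^ 2 - (al p ^ 2 / a₁ - be p ^ 2 / a₂)) :
    (∀ p : ℝ × ℝ, fderiv ℝ F p = 0) ∧ ∀ p q : ℝ × ℝ, F p = F q := by
  replace hF : F = firstIntegral a₁ a₂ mu lam al be := hF
  subst hF
  have hal := hal.differentiable one_ne_zero
  have hbe := hbe.differentiable one_ne_zero
  have hlam := hlam.differentiable one_ne_zero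
  have hmu := hmu.differentiable one_ne_zero
  have hFdiff : Differentiable ℝ (firstIntegral a₁ a₂ mu lam al be) := fun p =>
    differentiableAt_firstIntegral (hmu p) (hlam p) (hal p) (hbe p)
  have hFu (p : ℝ × ℝ) : pdu (firstIntegral a₁ a₂ mu lam al be) p = 0 := by
    rw [pdu_firstIntegral (hmu p) (hlam p) (hal p) (hbe p), hau, hbu, hlu, hmuu]
    ring
  have hFv (p : ℝ × ℝ) : pdv (firstIntegral a₁ a₂ mu lam al be) p = 0 := by
    rw [pdv_firstIntegral (hmu p) (hlam p) (hal p) (hbe p), hav, hbv, hlv, hmuv]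
    ring
  have hzero (p : ℝ × ℝ) : fderiv ℝ (firstIntegral a₁ a₂ mu lam al be) p = 0 :=
    fderiv_eq_zero_of_pdu_of_pdv (hFdiff p) (hFu p) (hFv p)
  exact ⟨hzero, is_const_of_fderiv_eq_zero hFdiff hzero⟩

/-- The quantity `μ² − λ² − (α²/a₁ − β²/a₂)` is a first integral of the differential part
of the linear system governing deformations of the real hyperbolic paraboloid: its
(total) derivative vanishes identically, hence it is constant on `ℝ²`. -/
theorem first_integral_of_linear_system
    (a₁ a₂ : ℝ) (ha₁ : a₁ ≠ 0) (ha₂ : a₂ ≠ 0)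
    (al be lam mu th : ℝ × ℝ → ℝ)
    (hal : ContDiff ℝ 1 al) (hbe : ContDiff ℝ 1 be) (hlam : ContDiff ℝ 1 lam)
    (hmu : ContDiff ℝ 1 mu) (hth : ContDiff ℝ 1 th)
    (hau : ∀ p : ℝ × ℝ, pdu al p = lam p * Real.cosh (th p))
    (hav : ∀ p : ℝ × ℝ, pdv al p = mu p * Real.sinh (th p))
    (hbu : ∀ p : ℝ × ℝ, pdu be p = lam p * Real.sinh (th p))
    (hbv : ∀ p : ℝ × ℝ, pdv be p = mu p * Real.cosh (th p))
    (hlu : ∀ p : ℝ × ℝ, pdu lam p =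
      -Real.cosh (th p) * (al p / a₁) + Real.sinh (th p) * (be p / a₂) + mu p * pdv th p)
    (hlv : ∀ p : ℝ × ℝ, pdv lam p = mu p * pdu th p)
    (hmuu : ∀ p : ℝ × ℝ, pdu mu p = lam p * pdv th p)
    (hmuv : ∀ p : ℝ × ℝ, pdv mu p =
      Real.sinh (th p) * (al p / a₁) - Real.cosh (th p) * (be p / a₂) + lam p * pdu th p)
    (F : ℝ × ℝ → ℝ)
    (hF : F = fun p : ℝ × ℝ =>
      mu p ^ 2 - lam p ^ 2 - (al p ^ 2 / a₁ - be p ^ 2 / a₂)) :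
    (∀ p : ℝ × ℝ, fderiv ℝ F p = 0) ∧ ∀ p q : ℝ × ℝ, F p = F q :=
  first_integral_of_linear_system_general a₁ a₂ al be lam mu th hal hbe hlam hmu hau hav hbu hbv hlu
    hlv hmuu hmuv F hF
end

section
/- (Peterson's deformations of the hyperbolic paraboloid.) Let a₁ > 0 > a₂ and s > 0, and let U := {(α,β) ∈ ℝ² : α² < a₁·sinh²s}. Define x_s : U → ℝ³ by x_s(α,β) := ( ∫₀^α √(a₁ − t²/sinh²s) dt, ∫₀^β √(−a₂ + t²/cosh²s) dt, (α² − β²·tanh²s)/(2·tanh s) ). Then at every point of U: |∂x_s/∂α|² = a₁ + α², (∂x_s/∂α)·(∂x_s/∂β) = −α·β, and |∂x_s/∂β|² = −a₂ + β². In particular the first fundamental form of x_s is independent of s and coincides with that of the hyperbolic paraboloid x₀(α,β) := (√a₁·α, √(−a₂)·β, (α²−β²)/2), so each surface x_s is isometric (in the induced metric) to the corresponding region of the hyperbolic paraboloid. -/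
/-- Partial derivative with respect to the first variable `α`. -/
noncomputable def pda (f : ℝ × ℝ → ℝ) (p : ℝ × ℝ) : ℝ :=
  deriv (fun a => f (a, p.2)) p.1

/-- Partial derivative with respect to the second variable `β`. -/
noncomputable def pdb (f : ℝ × ℝ → ℝ) (p : ℝ × ℝ) : ℝ :=
  deriv (fun b => f (p.1, b)) p.2

/-!
The first two coordinates of `x_s` depend on one variable each, so their partial derivatives
are the integrands, and the third coordinate has partials `α / tanh s` and `-β tanh s`.
The coefficients `E` and `G` then collapse by `coth² s - csch² s = 1` and
`sech² s + tanh² s = 1`, while in `F` the factors `tanh s` cancel.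
-/

open Real

section PartialDerivatives

variable {g : ℝ → ℝ} (a : ℝ) (p : ℝ × ℝ)

theorem pda_intervalIntegral_fst (hg : Continuous g) :
    pda (fun q => ∫ t in a..q.1, g t) p = g p.1 :=
  Continuous.deriv_integral g hg a p.1

theorem pdb_intervalIntegral_fst : pdb (fun q => ∫ t in a..q.1, g t) p = 0 :=
  deriv_const p.2 (∫ t in a..p.1, g t)

theorem pda_intervalIntegral_snd : pda (fun q => ∫ t in a..q.2, g t) p = 0 :=
  deriv_const p.1 (∫ t in a..p.2, g t)

theorem pdb_intervalIntegral_snd (hg : Continuous g) :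
    pdb (fun q => ∫ t in a..q.2, g t) p = g p.2 :=
  Continuous.deriv_integral g hg a p.2

end PartialDerivatives

section Saddle

variable (k : ℝ) (p : ℝ × ℝ)

theorem pda_saddle : pda (fun q => (q.1 ^ 2 - q.2 ^ 2 * k ^ 2) / (2 * k)) p = p.1 / k := by
  have h := ((hasDerivAt_pow 2 p.1).sub_const (p.2 ^ 2 * k ^ 2)).div_const (2 * k)
  rw [pda, h.deriv]
  ring

theorem pdb_saddle :
    pdb (fun q => (q.1 ^ 2 - q.2 ^ 2 * k ^ 2) / (2 * k)) p = -(p.2 * k) := by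
  have h := (((hasDerivAt_pow 2 p.2).mul_const (k ^ 2)).const_sub (p.1 ^ 2)).div_const (2 * k)
  rw [pdb, h.deriv]
  rcases eq_or_ne k 0 with rfl | hk
  · simp
  · field_simp
    norm_num

end Saddle

theorem inv_tanh_sq_sub_inv_sinh_sq {s : ℝ} (hs : s ≠ 0) :
    (tanh s ^ 2)⁻¹ - (sinh s ^ 2)⁻¹ = 1 := by
  have : sinh s ≠ 0 := sinh_ne_zero.2 hs
  rw [tanh_eq_sinh_div_cosh]
  field_simp
  linarith [cosh_sq_sub_sinh_sq s]

theorem inv_cosh_sq_add_tanh_sq (s : ℝ) : (cosh s ^ 2)⁻¹ + tanh s ^ 2 = 1 := by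
  rw [tanh_eq_sinh_div_cosh]
  field_simp
  linarith [cosh_sq_sub_sinh_sq s]

theorem peterson_deformations_hyperbolic_paraboloid_general
    (a₁ a₂ s : ℝ) (ha₂ : a₂ < 0) (hs : 0 < s)
    (U : Set (ℝ × ℝ)) (hU : U = {p : ℝ × ℝ | p.1 ^ 2 < a₁ * Real.sinh s ^ 2})
    (X₁ X₂ X₃ : ℝ × ℝ → ℝ)
    (hX₁ : X₁ = fun p : ℝ × ℝ =>
      ∫ t in (0:ℝ)..p.1, Real.sqrt (a₁ - t ^ 2 / Real.sinh s ^ 2))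
    (hX₂ : X₂ = fun p : ℝ × ℝ =>
      ∫ t in (0:ℝ)..p.2, Real.sqrt (-a₂ + t ^ 2 / Real.cosh s ^ 2))
    (hX₃ : X₃ = fun p : ℝ × ℝ =>
      (p.1 ^ 2 - p.2 ^ 2 * Real.tanh s ^ 2) / (2 * Real.tanh s)) :
    ∀ p ∈ U,
      pda X₁ p ^ 2 + pda X₂ p ^ 2 + pda X₃ p ^ 2 = a₁ + p.1 ^ 2 ∧
      pda X₁ p * pdb X₁ p + pda X₂ p * pdb X₂ p + pda X₃ p * pdb X₃ p
        = -(p.1 * p.2) ∧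
      pdb X₁ p ^ 2 + pdb X₂ p ^ 2 + pdb X₃ p ^ 2 = -a₂ + p.2 ^ 2 := by
  subst hU hX₁ hX₂ hX₃
  intro p (hp : p.1 ^ 2 < a₁ * sinh s ^ 2)
  have hE : 0 ≤ a₁ - p.1 ^ 2 / sinh s ^ 2 :=
    sub_nonneg.2 ((div_le_iff₀ (pow_pos (sinh_pos_iff.2 hs) 2)).2 hp.le)
  have hG : 0 ≤ -a₂ + p.2 ^ 2 / cosh s ^ 2 := add_nonneg (neg_nonneg.2 ha₂.le) (by positivity)
  rw [pda_intervalIntegral_fst _ _ (by fun_prop), pdb_intervalIntegral_fst,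
    pda_intervalIntegral_snd, pdb_intervalIntegral_snd _ _ (by fun_prop), pda_saddle, pdb_saddle]
  refine ⟨?_, ?_, ?_⟩
  · rw [sq_sqrt hE]
    linear_combination p.1 ^ 2 * inv_tanh_sq_sub_inv_sinh_sq hs.ne'
  · have htanh : tanh s ≠ 0 := by
      rw [tanh_eq_sinh_div_cosh]
      exact div_ne_zero (sinh_ne_zero.2 hs.ne') (cosh_pos s).ne'
    simp only [mul_zero, zero_mul, zero_add]
    field_simp
  · rw [sq_sqrt hG]
    linear_combination p.2 ^ 2 * inv_cosh_sq_add_tanh_sq s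

/-- Peterson's deformations of the hyperbolic paraboloid: the surface
`x_s(α,β) = (∫₀^α √(a₁ − t²/sinh²s) dt, ∫₀^β √(−a₂ + t²/cosh²s) dt,
(α² − β²·tanh²s)/(2·tanh s))` has, on `U = {α² < a₁·sinh²s}`, first fundamental form
`E = a₁ + α²`, `F = −α·β`, `G = −a₂ + β²`, independent of `s` and equal to that of
the hyperbolic paraboloid `x₀(α,β) = (√a₁·α, √(−a₂)·β, (α²−β²)/2)`. -/
theorem peterson_deformations_hyperbolic_paraboloid
    (a₁ a₂ s : ℝ) (ha₁ : 0 < a₁) (ha₂ : a₂ < 0) (hs : 0 < s)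
    (U : Set (ℝ × ℝ)) (hU : U = {p : ℝ × ℝ | p.1 ^ 2 < a₁ * Real.sinh s ^ 2})
    (X₁ X₂ X₃ : ℝ × ℝ → ℝ)
    (hX₁ : X₁ = fun p : ℝ × ℝ =>
      ∫ t in (0:ℝ)..p.1, Real.sqrt (a₁ - t ^ 2 / Real.sinh s ^ 2))
    (hX₂ : X₂ = fun p : ℝ × ℝ =>
      ∫ t in (0:ℝ)..p.2, Real.sqrt (-a₂ + t ^ 2 / Real.cosh s ^ 2))
    (hX₃ : X₃ = fun p : ℝ × ℝ =>
      (p.1 ^ 2 - p.2 ^ 2 * Real.tanh s ^ 2) / (2 * Real.tanh s)) :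
    ∀ p ∈ U,
      pda X₁ p ^ 2 + pda X₂ p ^ 2 + pda X₃ p ^ 2 = a₁ + p.1 ^ 2 ∧
      pda X₁ p * pdb X₁ p + pda X₂ p * pdb X₂ p + pda X₃ p * pdb X₃ p
        = -(p.1 * p.2) ∧
      pdb X₁ p ^ 2 + pdb X₂ p ^ 2 + pdb X₃ p ^ 2 = -a₂ + p.2 ^ 2 :=
  peterson_deformations_hyperbolic_paraboloid_general a₁ a₂ s ha₂ hs U hU X₁ X₂ X₃ hX₁ hX₂ hX₃
end

section
/- (Tangency configuration for confocal hyperbolic paraboloids and its symmetry.) Let a₁ > z > 0 > a₂, set r₁ := √(1 − z/a₁), r₂ := √(1 − z/a₂), and for w ∈ {0, z} define x_w(α,β) := (√(a₁−w)·α, √(w−a₂)·β, (α²−β²+w)/2) ∈ ℝ³, and H(α,β) := α²/a₁ − β²/a₂ + 1. Then for all (α₀,β₀), (α₁,β₁) ∈ ℝ²: (i) the point x_z(α₁,β₁) lies in the affine tangent plane x₀(α₀,β₀) + span{∂_α x₀(α₀,β₀), ∂_β x₀(α₀,β₀)} if and only if (r₁α₁−α₀)² − (r₂β₁−β₀)²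 = −z·H(α₁,β₁); (ii) in that case x_z(α₁,β₁) = x₀(α₀,β₀) + (r₁α₁−α₀)·∂_α x₀(α₀,β₀) + (r₂β₁−β₀)·∂_β x₀(α₀,β₀); (iii) the condition is symmetric: (r₁α₁−α₀)² − (r₂β₁−β₀)² = −z·H(α₁,β₁) holds if and only if (r₁α₀−α₁)² − (r₂β₀−β₁)² = −z·H(α₀,β₀). -/
/-!
Since `√(a₁ - z) = r₁ √a₁` and `√(z - a₂) = r₂ √(-a₂)`, both paraboloids are images of one
parametrization `(c₁ α, c₂ β, (α² - β² + w)/2)` with scaled coefficients. The partial derivatives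
of `x₀` at `(α₀, β₀)` are `(√a₁, 0, α₀)` and `(0, √(-a₂), -β₀)`, so the first two coordinates of
`x_z(α₁, β₁) = x₀(α₀, β₀) + a ∂_α + b ∂_β` force `a = r₁α₁ - α₀`, `b = r₂β₁ - β₀`, and the third
coordinate becomes the quadratic condition, using `r₁² = 1 - z/a₁`, `r₂² = 1 - z/a₂`.
-/

noncomputable def paraboloid (c₁ c₂ w : ℝ) (p : ℝ × ℝ) : ℝ × ℝ × ℝ :=
  (c₁ * p.1, c₂ * p.2, (p.1 ^ 2 - p.2 ^ 2 + w) / 2)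

open ContinuousLinearMap in
theorem hasFDerivAt_paraboloid (c₁ c₂ w : ℝ) (q : ℝ × ℝ) :
    HasFDerivAt (paraboloid c₁ c₂ w)
      ((c₁ • fst ℝ ℝ ℝ).prod ((c₂ • snd ℝ ℝ ℝ).prod (q.1 • fst ℝ ℝ ℝ - q.2 • snd ℝ ℝ ℝ))) q := by
  have hz : HasFDerivAt (fun p : ℝ × ℝ => (p.1 ^ 2 - p.2 ^ 2 + w) / 2)
      (q.1 • fst ℝ ℝ ℝ - q.2 • snd ℝ ℝ ℝ) q := by
    have h₁ := hasFDerivAt_fst (𝕜 := ℝ) (p := q)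
    have h₂ := hasFDerivAt_snd (𝕜 := ℝ) (p := q)
    have h := (((h₁.mul h₁).sub (h₂.mul h₂)).add_const w).mul_const (2⁻¹ : ℝ)
    refine (h.congr_fderiv ?_).congr_of_eventuallyEq (.of_forall fun p => ?_)
    · ext <;> simp <;> ring
    · simp only [Pi.sub_apply, Pi.mul_apply]; ring
  exact (hasFDerivAt_fst.const_mul c₁).prodMk ((hasFDerivAt_snd.const_mul c₂).prodMk hz)

theorem fderiv_paraboloid_apply_one_zero (c₁ c₂ w : ℝ) (q : ℝ × ℝ) :
    fderiv ℝ (paraboloid c₁ c₂ w) q (1, 0) = (c₁, 0, q.1) := by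
  simp [(hasFDerivAt_paraboloid c₁ c₂ w q).fderiv]

theorem fderiv_paraboloid_apply_zero_one (c₁ c₂ w : ℝ) (q : ℝ × ℝ) :
    fderiv ℝ (paraboloid c₁ c₂ w) q (0, 1) = (0, c₂, -q.2) := by
  simp [(hasFDerivAt_paraboloid c₁ c₂ w q).fderiv]

theorem paraboloid_eq_add_smul_iff {c₁ c₂ : ℝ} (hc₁ : c₁ ≠ 0) (hc₂ : c₂ ≠ 0) (r₁ r₂ w a b : ℝ)
    (p q : ℝ × ℝ) :
    paraboloid (r₁ * c₁) (r₂ * c₂) w p =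
        paraboloid c₁ c₂ 0 q + a • (c₁, 0, q.1) + b • (0, c₂, -q.2) ↔
      a = r₁ * p.1 - q.1 ∧ b = r₂ * p.2 - q.2 ∧
        (r₁ * p.1 - q.1) ^ 2 - (r₂ * p.2 - q.2) ^ 2 =
          (r₁ ^ 2 - 1) * p.1 ^ 2 - (r₂ ^ 2 - 1) * p.2 ^ 2 - w := by
  simp only [paraboloid, Prod.smul_mk, Prod.mk_add_mk, Prod.mk.injEq, smul_eq_mul]
  constructor
  · rintro ⟨h₁, h₂, h₃⟩
    have ha : a = r₁ * p.1 - q.1 := mul_right_cancel₀ hc₁ (by linear_combination -h₁)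
    have hb : b = r₂ * p.2 - q.2 := mul_right_cancel₀ hc₂ (by linear_combination -h₂)
    subst ha hb
    exact ⟨rfl, rfl, by linear_combination 2 * h₃⟩
  · rintro ⟨rfl, rfl, h⟩
    exact ⟨by ring, by ring, by linear_combination h / 2⟩

/-- Both sides say `α₀² - 2r₁α₀α₁ + α₁² - (β₀² - 2r₂β₀β₁ + β₁²) = -w`. -/
theorem tangency_condition_comm (r₁ r₂ w : ℝ) (p q : ℝ × ℝ) :
    (r₁ * p.1 - q.1) ^ 2 - (r₂ * p.2 - q.2) ^ 2 =
        (r₁ ^ 2 - 1) * p.1 ^ 2 - (r₂ ^ 2 - 1) * p.2 ^ 2 - w ↔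
      (r₁ * q.1 - p.1) ^ 2 - (r₂ * q.2 - p.2) ^ 2 =
        (r₁ ^ 2 - 1) * q.1 ^ 2 - (r₂ ^ 2 - 1) * q.2 ^ 2 - w := by
  constructor <;> intro h <;> linear_combination h

theorem Real.sqrt_eq_sqrt_div_mul_sqrt (u : ℝ) {v : ℝ} (hv : 0 < v) : √u = √(u / v) * √v := by
  rw [Real.sqrt_div' _ hv.le, div_mul_cancel₀ _ (Real.sqrt_pos.2 hv).ne']

/-- Tangency configuration for the confocal hyperbolic paraboloids
`x_w(α,β) = (√(a₁−w)·α, √(w−a₂)·β, (α²−β²+w)/2)`, `w ∈ {0, z}`, and its symmetry: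
with `r₁ = √(1−z/a₁)`, `r₂ = √(1−z/a₂)`, `H = α²/a₁ − β²/a₂ + 1`, the point
`x_z(α₁,β₁)` lies in the affine tangent plane of `x₀` at `(α₀,β₀)` iff
`(r₁α₁−α₀)² − (r₂β₁−β₀)² = −z·H(α₁,β₁)`; in that case the tangential coordinates are
exactly `(r₁α₁−α₀, r₂β₁−β₀)`; and the condition is symmetric in `0 ↔ 1`. -/
theorem tangency_configuration_confocal_hyperbolic_paraboloids
    (a₁ a₂ z : ℝ) (hz : 0 < z) (hza : z < a₁) (ha₂ : a₂ < 0)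
    (r₁ r₂ : ℝ) (hr₁ : r₁ = Real.sqrt (1 - z / a₁)) (hr₂ : r₂ = Real.sqrt (1 - z / a₂))
    (x : ℝ → ℝ × ℝ → ℝ × ℝ × ℝ)
    (hx : x = fun w (p : ℝ × ℝ) =>
      (Real.sqrt (a₁ - w) * p.1, Real.sqrt (w - a₂) * p.2,
        (p.1 ^ 2 - p.2 ^ 2 + w) / 2))
    (H : ℝ × ℝ → ℝ)
    (hH : H = fun p : ℝ × ℝ => p.1 ^ 2 / a₁ - p.2 ^ 2 / a₂ + 1) :
    ∀ q₀ q₁ : ℝ × ℝ,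
      ((∃ a b : ℝ,
          x z q₁ = x 0 q₀ + a • (fderiv ℝ (x 0) q₀ (1, 0))
            + b • (fderiv ℝ (x 0) q₀ (0, 1))) ↔
        (r₁ * q₁.1 - q₀.1) ^ 2 - (r₂ * q₁.2 - q₀.2) ^ 2 = -z * H q₁) ∧
      ((r₁ * q₁.1 - q₀.1) ^ 2 - (r₂ * q₁.2 - q₀.2) ^ 2 = -z * H q₁ →
        x z q₁ = x 0 q₀ + (r₁ * q₁.1 - q₀.1) • (fderiv ℝ (x 0) q₀ (1, 0))
          + (r₂ * q₁.2 - q₀.2) • (fderiv ℝ (x 0) q₀ (0, 1))) ∧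
      ((r₁ * q₁.1 - q₀.1) ^ 2 - (r₂ * q₁.2 - q₀.2) ^ 2 = -z * H q₁ ↔
        (r₁ * q₀.1 - q₁.1) ^ 2 - (r₂ * q₀.2 - q₁.2) ^ 2 = -z * H q₀) := by
  have ha₁ : 0 < a₁ := hz.trans hza
  have hr₁sq : r₁ ^ 2 = 1 - z / a₁ := by
    rw [hr₁, Real.sq_sqrt (by rw [sub_nonneg, div_le_one ha₁]; exact hza.le)]
  have hr₂sq : r₂ ^ 2 = 1 - z / a₂ := by
    rw [hr₂, Real.sq_sqrt (by have := div_neg_of_pos_of_neg hz ha₂; linarith)]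
  have hzH (p : ℝ × ℝ) : -z * H p = (r₁ ^ 2 - 1) * p.1 ^ 2 - (r₂ ^ 2 - 1) * p.2 ^ 2 - z := by
    rw [hH, hr₁sq, hr₂sq]; ring
  have hx₀ : x 0 = paraboloid √a₁ √(-a₂) 0 := by
    simp only [hx, sub_zero, zero_sub]; rfl
  have hx_z : x z = paraboloid (r₁ * √a₁) (r₂ * √(-a₂)) z := by
    have h₁ : (a₁ - z) / a₁ = 1 - z / a₁ := by field_simp
    have h₂ : (z - a₂) / -a₂ = 1 - z / a₂ := by field_simp [ha₂.ne]; ring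
    simp only [hx]
    rw [Real.sqrt_eq_sqrt_div_mul_sqrt (a₁ - z) ha₁,
      Real.sqrt_eq_sqrt_div_mul_sqrt (z - a₂) (neg_pos.2 ha₂), h₁, h₂, ← hr₁, ← hr₂]
    rfl
  have hc₁ : √a₁ ≠ 0 := (Real.sqrt_pos.2 ha₁).ne'
  have hc₂ : √(-a₂) ≠ 0 := (Real.sqrt_pos.2 (neg_pos.2 ha₂)).ne'
  intro q₀ q₁
  simp only [hx₀, hx_z, fderiv_paraboloid_apply_one_zero, fderiv_paraboloid_apply_zero_one, hzH,
    paraboloid_eq_add_smul_iff hc₁ hc₂]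
  exact ⟨⟨fun ⟨_, _, _, _, h⟩ => h, fun h => ⟨_, _, rfl, rfl, h⟩⟩, fun h => ⟨trivial, trivial, h⟩,
    tangency_condition_comm r₁ r₂ z q₁ q₀⟩
end

section
/- Let a₁ > 0 > a₂ and define x : ℝ² → ℝ³ by x(α,β) := (√a₁·α, √(−a₂)·β, (α²−β²)/2), and H(α,β) := α²/a₁ − β²/a₂ + 1 (note H > 0 everywhere). Define the tangent vector field V(α,β) := (∂_α(log √H))·∂_α x(α,β) − (∂_β(log √H))·∂_β x(α,β), where ∂_α(log √H) = (α/a₁)/H and ∂_β(log √H) = (−β/a₂)/H. Then at every point: V·(∂_α x) = α, V·(∂_β x) = −β, and |V|² = 1 − 1/H, where · is the Euclidean inner product on ℝ³. -/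
def dot3 (x y : ℝ × ℝ × ℝ) : ℝ :=
  x.1 * y.1 + x.2.1 * y.2.1 + x.2.2 * y.2.2

/-! Once the coordinate tangent vectors `x_α = (√a₁, 0, α)` and `x_β = (0, √(−a₂), −β)` are
computed, clearing the single denominator `H` turns the three claims into polynomial identities,
modulo `√a₁² = a₁`, `√(−a₂)² = −a₂` and `a₁ a₂ H = α² a₂ − β² a₁ + a₁ a₂`. -/

open ContinuousLinearMap

noncomputable def hyperbolicParaboloid (c₁ c₂ : ℝ) (p : ℝ × ℝ) : ℝ × ℝ × ℝ :=
  (c₁ * p.1, c₂ * p.2, (p.1 ^ 2 - p.2 ^ 2) / 2)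

theorem hasFDerivAt_hyperbolicParaboloid (c₁ c₂ : ℝ) (p : ℝ × ℝ) :
    HasFDerivAt (hyperbolicParaboloid c₁ c₂)
      ((c₁ • fst ℝ ℝ ℝ).prod ((c₂ • snd ℝ ℝ ℝ).prod (p.1 • fst ℝ ℝ ℝ - p.2 • snd ℝ ℝ ℝ))) p := by
  have hz : HasFDerivAt (fun q : ℝ × ℝ => (q.1 ^ 2 - q.2 ^ 2) / 2)
      (p.1 • fst ℝ ℝ ℝ - p.2 • snd ℝ ℝ ℝ) p := by
    have h₁ : HasFDerivAt (fun q : ℝ × ℝ => q.1 ^ 2) _ p :=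
      (hasFDerivAt_fst (𝕜 := ℝ) (p := p)).pow 2
    have h₂ : HasFDerivAt (fun q : ℝ × ℝ => q.2 ^ 2) _ p :=
      (hasFDerivAt_snd (𝕜 := ℝ) (p := p)).pow 2
    refine (((h₁.sub h₂).mul_const (1 / 2 : ℝ)).congr_of_eventuallyEq
      (.of_forall fun q => by simp only [Pi.sub_apply]; ring)).congr_fderiv ?_
    ext <;> simp
  exact (hasFDerivAt_fst.const_mul c₁).prodMk ((hasFDerivAt_snd.const_mul c₂).prodMk hz)

theorem fderiv_hyperbolicParaboloid_apply_one_zero (c₁ c₂ : ℝ) (p : ℝ × ℝ) :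
    fderiv ℝ (hyperbolicParaboloid c₁ c₂) p (1, 0) = (c₁, 0, p.1) := by
  simp [(hasFDerivAt_hyperbolicParaboloid c₁ c₂ p).fderiv]

theorem fderiv_hyperbolicParaboloid_apply_zero_one (c₁ c₂ : ℝ) (p : ℝ × ℝ) :
    fderiv ℝ (hyperbolicParaboloid c₁ c₂) p (0, 1) = (0, c₂, -p.2) := by
  simp [(hasFDerivAt_hyperbolicParaboloid c₁ c₂ p).fderiv]

theorem sq_div_sub_sq_div_add_one_pos {a₁ a₂ : ℝ} (ha₁ : 0 < a₁) (ha₂ : a₂ < 0) (α β : ℝ) :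
    0 < α ^ 2 / a₁ - β ^ 2 / a₂ + 1 := by
  have h₁ : 0 ≤ α ^ 2 / a₁ := by positivity
  have h₂ : β ^ 2 / a₂ ≤ 0 := div_nonpos_of_nonneg_of_nonpos (sq_nonneg β) ha₂.le
  linarith

theorem dot3_distinguished_tangent {a₁ a₂ c₁ c₂ α β H : ℝ} (ha₁ : a₁ ≠ 0) (ha₂ : a₂ ≠ 0)
    (hc₁ : c₁ ^ 2 = a₁) (hc₂ : c₂ ^ 2 = -a₂) (hH : H = α ^ 2 / a₁ - β ^ 2 / a₂ + 1) (hH₀ : H ≠ 0)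
    {V : ℝ × ℝ × ℝ} (hV : V = (α / a₁ / H) • (c₁, 0, α) - (-β / a₂ / H) • (0, c₂, -β)) :
    dot3 V (c₁, 0, α) = α ∧ dot3 V (0, c₂, -β) = -β ∧ dot3 V V = 1 - 1 / H := by
  have hHa : H * (a₁ * a₂) = α ^ 2 * a₂ - β ^ 2 * a₁ + a₁ * a₂ := by
    rw [hH]; field_simp
  subst hV
  simp only [dot3, Prod.smul_mk, Prod.fst_sub, Prod.snd_sub, smul_eq_mul]
  refine ⟨?_, ?_, ?_⟩ <;> field_simp
  · linear_combination α * a₂ * hc₁ - α * hHa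
  · linear_combination a₁ * β * hc₂ + β * hHa
  · linear_combination α ^ 2 * a₂ ^ 2 * hc₁ + a₁ ^ 2 * β ^ 2 * hc₂
      - (α ^ 2 * a₂ - a₁ * β ^ 2 + a₁ * a₂ * H) * hHa

/-- For the real hyperbolic paraboloid `x(α,β) = (√a₁·α, √(−a₂)·β, (α²−β²)/2)` with
`H = α²/a₁ − β²/a₂ + 1 > 0`, the distinguished tangent vector field
`V = (∂_α log√H)·x_α − (∂_β log√H)·x_β`, with `∂_α log√H = (α/a₁)/H` and
`∂_β log√H = (−β/a₂)/H`, satisfies `V·x_α = α`, `V·x_β = −β` and `|V|² = 1 − 1/H`. -/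
theorem distinguished_tangent_vector_field_hyperbolic_paraboloid
    (a₁ a₂ : ℝ) (ha₁ : 0 < a₁) (ha₂ : a₂ < 0)
    (x : ℝ × ℝ → ℝ × ℝ × ℝ)
    (hx : x = fun p : ℝ × ℝ =>
      (Real.sqrt a₁ * p.1, Real.sqrt (-a₂) * p.2, (p.1 ^ 2 - p.2 ^ 2) / 2))
    (H : ℝ × ℝ → ℝ)
    (hH : H = fun p : ℝ × ℝ => p.1 ^ 2 / a₁ - p.2 ^ 2 / a₂ + 1)
    (V : ℝ × ℝ → ℝ × ℝ × ℝ)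
    (hV : V = fun p : ℝ × ℝ =>
      ((p.1 / a₁) / H p) • (fderiv ℝ x p (1, 0))
        - ((-p.2 / a₂) / H p) • (fderiv ℝ x p (0, 1))) :
    ∀ p : ℝ × ℝ,
      dot3 (V p) (fderiv ℝ x p (1, 0)) = p.1 ∧
      dot3 (V p) (fderiv ℝ x p (0, 1)) = -p.2 ∧
      dot3 (V p) (V p) = 1 - 1 / H p := by
  intro p
  obtain rfl : x = hyperbolicParaboloid (Real.sqrt a₁) (Real.sqrt (-a₂)) := hx
  have hHp : H p = p.1 ^ 2 / a₁ - p.2 ^ 2 / a₂ + 1 := by rw [hH]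
  have hH₀ : H p ≠ 0 := hHp ▸ (sq_div_sub_sq_div_add_one_pos ha₁ ha₂ p.1 p.2).ne'
  subst hV
  simp only [fderiv_hyperbolicParaboloid_apply_one_zero, fderiv_hyperbolicParaboloid_apply_zero_one]
  exact dot3_distinguished_tangent ha₁.ne' ha₂.ne (Real.sq_sqrt ha₁.le)
    (Real.sq_sqrt (neg_nonneg.2 ha₂.le)) hHp hH₀ rfl
end

section
/- (Reduction of the 0-soliton of the hyperbolic paraboloid to the hyperbolic pendulum equation.) Let a₁, a₂ ∈ ℝ be nonzero with a₁⁻¹ − a₂⁻¹ = 1, and let α, β, μ, θ : ℝ → ℝ be continuously differentiable functions (with θ twice differentiable wherever asserted below) satisfying for all v ∈ ℝ: α'(v) = μ(v)·sinh θ(v), β'(v) = μ(v)·cosh θ(v), μ(v)·θ'(v) = cosh θ(v)·(α(v)/a₁) − sinh θ(v)·(β(v)/a₂), and μ'(v) = sinh θ(v)·(α(v)/a₁) − cosh θ(v)·(β(v)/a₂). Then at every point v with μ(v) ≠ 0, θ satisfies the hyperbolic pendulum equation θ''(v) = sinh θ(v) · cosh θ(v). -/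
/-!
Differentiating the equation for `μ θ'` and substituting the equations for `α'`, `β'`, `μ'`,
the terms in `θ'` cancel: the derivative of `cosh θ · f − sinh θ · g` is `θ'` times the
hyperbolically rotated combination `sinh θ · f − cosh θ · g`, which is exactly `μ'`. What is
left is `μ θ'' = (a₁⁻¹ − a₂⁻¹) μ sinh θ cosh θ`, and one divides by `μ`.
-/

theorem HasDerivAt.cosh_mul_sub_sinh_mul {f g θ : ℝ → ℝ} {f' g' θ' x : ℝ}
    (hθ : HasDerivAt θ θ' x) (hf : HasDerivAt f f' x) (hg : HasDerivAt g g' x) :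
    HasDerivAt (fun y => Real.cosh (θ y) * f y - Real.sinh (θ y) * g y)
      (θ' * (Real.sinh (θ x) * f x - Real.cosh (θ x) * g x) +
        (Real.cosh (θ x) * f' - Real.sinh (θ x) * g')) x :=
  ((hθ.cosh.mul hf).sub (hθ.sinh.mul hg)).congr_deriv (by ring)

open Real in
theorem mul_secondDeriv_eq_of_zeroSoliton_system (a₁ a₂ : ℝ) {al be mu th : ℝ → ℝ}
    {v θ'' : ℝ}
    (hal : HasDerivAt al (mu v * sinh (th v)) v)
    (hbe : HasDerivAt be (mu v * cosh (th v)) v)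
    (hmu : HasDerivAt mu (sinh (th v) * (al v / a₁) - cosh (th v) * (be v / a₂)) v)
    (hth : HasDerivAt th (deriv th v) v) (hth' : HasDerivAt (deriv th) θ'' v)
    (h3 : ∀ v, mu v * deriv th v = cosh (th v) * (al v / a₁) - sinh (th v) * (be v / a₂)) :
    mu v * θ'' = (a₁⁻¹ - a₂⁻¹) * (mu v * (sinh (th v) * cosh (th v))) := by
  have hlhs : HasDerivAt (fun y => mu y * deriv th y) _ v := hmu.mul hth'
  rw [funext h3] at hlhs
  have hrhs := hth.cosh_mul_sub_sinh_mul (hal.div_const a₁) (hbe.div_const a₂)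
  linear_combination hlhs.unique hrhs

theorem zero_soliton_hyperbolic_pendulum_general
    (a₁ a₂ : ℝ) (ha : a₁⁻¹ - a₂⁻¹ = 1)
    (al be mu th : ℝ → ℝ)
    (hal : ContDiff ℝ 1 al) (hbe : ContDiff ℝ 1 be)
    (hmu : ContDiff ℝ 1 mu) (hth : ContDiff ℝ 2 th)
    (h1 : ∀ v : ℝ, deriv al v = mu v * Real.sinh (th v))
    (h2 : ∀ v : ℝ, deriv be v = mu v * Real.cosh (th v))
    (h3 : ∀ v : ℝ, mu v * deriv th v =
      Real.cosh (th v) * (al v / a₁) - Real.sinh (th v) * (be v / a₂))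
    (h4 : ∀ v : ℝ, deriv mu v =
      Real.sinh (th v) * (al v / a₁) - Real.cosh (th v) * (be v / a₂)) :
    ∀ v : ℝ, mu v ≠ 0 →
      deriv (deriv th) v = Real.sinh (th v) * Real.cosh (th v) := by
  intro v hv
  have hderiv {f : ℝ → ℝ} (hf : ContDiff ℝ 1 f) : HasDerivAt f (deriv f v) v :=
    (hf.differentiable one_ne_zero v).hasDerivAt
  have key := mul_secondDeriv_eq_of_zeroSoliton_system a₁ a₂
    (h1 v ▸ hderiv hal) (h2 v ▸ hderiv hbe) (h4 v ▸ hderiv hmu)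
    ((hth.differentiable two_ne_zero v).hasDerivAt)
    ((hth.differentiable_deriv_two v).hasDerivAt) h3
  rw [ha, one_mul] at key
  exact mul_left_cancel₀ hv key

/-- Reduction of the 0-soliton of the hyperbolic paraboloid to the hyperbolic pendulum
equation: if `α, β, μ, θ : ℝ → ℝ` satisfy the degenerate (λ = 0) ODE system
`α' = μ·sinh θ`, `β' = μ·cosh θ`, `μ·θ' = cosh θ·(α/a₁) − sinh θ·(β/a₂)`,
`μ' = sinh θ·(α/a₁) − cosh θ·(β/a₂)`, then wherever `μ ≠ 0` (and `θ` is twice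
differentiable) one has `θ'' = sinh θ · cosh θ`. -/
theorem zero_soliton_hyperbolic_pendulum
    (a₁ a₂ : ℝ) (ha₁ : a₁ ≠ 0) (ha₂ : a₂ ≠ 0) (ha : a₁⁻¹ - a₂⁻¹ = 1)
    (al be mu th : ℝ → ℝ)
    (hal : ContDiff ℝ 1 al) (hbe : ContDiff ℝ 1 be)
    (hmu : ContDiff ℝ 1 mu) (hth : ContDiff ℝ 2 th)
    (h1 : ∀ v : ℝ, deriv al v = mu v * Real.sinh (th v))
    (h2 : ∀ v : ℝ, deriv be v = mu v * Real.cosh (th v))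
    (h3 : ∀ v : ℝ, mu v * deriv th v =
      Real.cosh (th v) * (al v / a₁) - Real.sinh (th v) * (be v / a₂))
    (h4 : ∀ v : ℝ, deriv mu v =
      Real.sinh (th v) * (al v / a₁) - Real.cosh (th v) * (be v / a₂)) :
    ∀ v : ℝ, mu v ≠ 0 →
      deriv (deriv th) v = Real.sinh (th v) * Real.cosh (th v) :=
  zero_soliton_hyperbolic_pendulum_general a₁ a₂ ha al be mu th hal hbe hmu hth h1 h2 h3 h4
end
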